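/- arXiv:1307.7025 — 2 statements merged into one kernel-verified Lean document; each statement's English description precedes it below -/
import Mathlib

section
/- Let G = (V,E) be a finite simple graph, let {v,w} ∈ E with v ≠ w, and let G' = ((G⋆v)⋆w)⋆v be the local complementation of G along the edge {v,w}. Then: (i) {v,w} is an edge of G'; and (ii) for every vertex j ∈ V \ {v,w}, {j,v} is an edge of G' if and only if {j,w} is an edge of G, and {j,w} is an edge of G' if and only if {j,v} is an edge of G. -/
open scoped Matrix BigOperators
open scoped Classical

noncomputable section

/-- The state space of `n` qubits: amplitudes indexed by bit strings. -/
abbrev QState (n : ℕ) := (Fin n → Fin 2) → ℂ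

/-- Operators on `n` qubits, as matrices indexed by bit strings. -/
abbrev QOp (n : ℕ) := Matrix (Fin n → Fin 2) (Fin n → Fin 2) ℂ

def PauliX : Matrix (Fin 2) (Fin 2) ℂ := !![0, 1; 1, 0]
def PauliY : Matrix (Fin 2) (Fin 2) ℂ := !![0, -Complex.I; Complex.I, 0]
def PauliZ : Matrix (Fin 2) (Fin 2) ℂ := !![1, 0; 0, -1]

/-- The Hadamard matrix. -/
def Hmat : Matrix (Fin 2) (Fin 2) ℂ := ((1 / Real.sqrt 2 : ℝ) : ℂ) • !![1, 1; 1, -1]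

/-- `Z_θ = diag(1, e^{iθ})`. -/
def Zrot (θ : ℝ) : Matrix (Fin 2) (Fin 2) ℂ := !![1, 0; 0, Complex.exp (θ * Complex.I)]

/-- `X_θ = H · Z_θ · H`. -/
def Xrot (θ : ℝ) : Matrix (Fin 2) (Fin 2) ℂ := Hmat * Zrot θ * Hmat

/-- The single-qubit Pauli group: matrices `i^k · g` with `g ∈ {I,X,Y,Z}`. -/
def Pauli1 : Set (Matrix (Fin 2) (Fin 2) ℂ) :=
  {M | ∃ (k : Fin 4) (g : Matrix (Fin 2) (Fin 2) ℂ),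
    g ∈ ({1, PauliX, PauliY, PauliZ} : Set (Matrix (Fin 2) (Fin 2) ℂ)) ∧
    M = Complex.I ^ (k : ℕ) • g}

/-- A single-qubit Clifford unitary: a unitary normalizing the Pauli group. -/
def IsClifford1 (U : Matrix (Fin 2) (Fin 2) ℂ) : Prop :=
  U ∈ Matrix.unitaryGroup (Fin 2) ℂ ∧ ∀ g ∈ Pauli1, U * g * Uᴴ ∈ Pauli1

/-- The single-qubit operator `A` acting on qubit `v` (identity elsewhere). -/
def applyOn {n : ℕ} (v : Fin n) (A : Matrix (Fin 2) (Fin 2) ℂ) : QOp n :=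
  Matrix.of fun x y => if ∀ u, u ≠ v → x u = y u then A (x v) (y v) else 0

/-- The tensor product `A 0 ⊗ A 1 ⊗ ⋯ ⊗ A (n-1)` of single-qubit operators. -/
def tensorOp {n : ℕ} (A : Fin n → Matrix (Fin 2) (Fin 2) ℂ) : QOp n :=
  Matrix.of fun x y => ∏ j, A j (x j) (y j)

/-- The diagonal phase `(-1)^{x_u · x_v}` attached to an edge `e = {u,v}`. -/
def czPhase {n : ℕ} (e : Sym2 (Fin n)) (x : Fin n → Fin 2) : ℂ :=
  Sym2.lift ⟨fun u v => (-1 : ℂ) ^ ((x u : ℕ) * (x v : ℕ)),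
    fun u v => by dsimp only; rw [mul_comm ((x u : ℕ)) ((x v : ℕ))]⟩ e

/-- The controlled-Z operator on qubits `u`, `v`: diagonal with entries `(-1)^{x_u x_v}`. -/
def CZop {n : ℕ} (u v : Fin n) : QOp n :=
  Matrix.diagonal fun x => (-1 : ℂ) ^ ((x u : ℕ) * (x v : ℕ))

/-- The product of the (commuting, diagonal) controlled-Z operators over a set of edges. -/
def CZofEdges {n : ℕ} (E : Finset (Sym2 (Fin n))) : QOp n :=
  Matrix.diagonal fun x => ∏ e ∈ E, czPhase e x

/-- The state `|+⟩^{⊗n}`. -/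
def plusState (n : ℕ) : QState n := fun _ => ((1 / Real.sqrt 2 : ℝ) : ℂ) ^ n

/-- The basis state `|0⟩^{⊗n}`. -/
def ket0 (n : ℕ) : QState n := fun x => if x = fun _ => 0 then 1 else 0

/-- The graph state `|G⟩ = (∏_{{u,v} ∈ E} CZ_{u,v}) |+⟩^{⊗n}`. -/
def graphState {n : ℕ} (G : SimpleGraph (Fin n)) : QState n :=
  (CZofEdges G.edgeFinset).mulVec (plusState n)

/-- Local complementation of `G` about the vertex `v`: the edges inside the
neighbourhood of `v` are toggled. -/
def localComp {V : Type*} (G : SimpleGraph V) (v : V) : SimpleGraph V where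
  Adj a b := (G.Adj a v ∧ G.Adj b v ∧ a ≠ b ∧ ¬ G.Adj a b) ∨ (G.Adj a b ∧ ¬ (G.Adj a v ∧ G.Adj b v))
  symm := by
    constructor
    intro a b h
    rcases h with ⟨h1, h2, h3, h4⟩ | ⟨h1, h2⟩
    · exact Or.inl ⟨h2, h1, h3.symm, fun hc => h4 hc.symm⟩
    · exact Or.inr ⟨h1.symm, fun hc => h2 ⟨hc.2, hc.1⟩⟩
  loopless := by
    constructor
    intro a h
    rcases h with ⟨_, _, h3, _⟩ | ⟨h1, _⟩
    · exact h3 rfl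
    · exact G.loopless.irrefl a h1

/-- The (diagonal) product `∏_{u ∈ S} Z_u` of Pauli `Z` operators over the qubits in `S`. -/
def pauliZprod {n : ℕ} (S : Finset (Fin n)) : QOp n :=
  Matrix.diagonal fun x => ∏ u ∈ S, PauliZ (x u) (x u)

/-- The `n`-qubit Pauli group: matrices `i^k · (g_1 ⊗ ⋯ ⊗ g_n)` with `g_j ∈ {I,X,Y,Z}`. -/
def PauliGroup (n : ℕ) : Set (QOp n) :=
  {M | ∃ (k : Fin 4) (g : Fin n → Matrix (Fin 2) (Fin 2) ℂ),
    (∀ j, g j ∈ ({1, PauliX, PauliY, PauliZ} : Set (Matrix (Fin 2) (Fin 2) ℂ))) ∧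
    M = Complex.I ^ (k : ℕ) • tensorOp g}

/-- An `n`-qubit Clifford unitary: a unitary normalizing the `n`-qubit Pauli group. -/
def IsCliffordN (n : ℕ) (U : QOp n) : Prop :=
  U ∈ Matrix.unitaryGroup (Fin n → Fin 2) ℂ ∧ ∀ g ∈ PauliGroup n, U * g * Uᴴ ∈ PauliGroup n

/-- The six-element set `R` of allowed vertex operators of an rGS-LC diagram. -/
def Rset : Set (Matrix (Fin 2) (Fin 2) ℂ) :=
  {M | (∃ k : Fin 4, M = Zrot ((k : ℕ) * (Real.pi / 2))) ∨
    M = Xrot (Real.pi / 2) * Zrot (Real.pi / 2) ∨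
    M = Xrot (Real.pi / 2) * Zrot (3 * Real.pi / 2)}

/-- The two elements of `R` that have a red node. -/
def hasRedNode (M : Matrix (Fin 2) (Fin 2) ℂ) : Prop :=
  M = Xrot (Real.pi / 2) * Zrot (Real.pi / 2) ∨ M = Xrot (Real.pi / 2) * Zrot (3 * Real.pi / 2)

/-- An rGS-LC datum: all vertex operators in `R`, and no two adjacent vertices both
have vertex operators with a red node. -/
def IsRGSLC {n : ℕ} (G : SimpleGraph (Fin n)) (A : Fin n → Matrix (Fin 2) (Fin 2) ℂ) : Prop :=
  (∀ v, A v ∈ Rset) ∧ ∀ v w, G.Adj v w → ¬ (hasRedNode (A v) ∧ hasRedNode (A w))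

/-- The state `|G; A⟩ = (A_1 ⊗ ⋯ ⊗ A_n)|G⟩` of a GS-LC datum. -/
def rgslcState {n : ℕ} (G : SimpleGraph (Fin n)) (A : Fin n → Matrix (Fin 2) (Fin 2) ℂ) :
    QState n :=
  (tensorOp A).mulVec (graphState G)

/-- A pair of rGS-LC data is simplified if there is no pair of vertices `p`, `q` with an
unpaired red node at `p` in the first diagram and at `q` in the second, `p`, `q` adjacent
in one of the graphs. -/
def SimplifiedPair {n : ℕ} (G₁ : SimpleGraph (Fin n)) (A : Fin n → Matrix (Fin 2) (Fin 2) ℂ)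
    (G₂ : SimpleGraph (Fin n)) (B : Fin n → Matrix (Fin 2) (Fin 2) ℂ) : Prop :=
  ¬ ∃ p q, (hasRedNode (A p) ∧ ¬ hasRedNode (B p)) ∧ (hasRedNode (B q) ∧ ¬ hasRedNode (A q)) ∧
    (G₁.Adj p q ∨ G₂.Adj p q)

/-- For `G' = ((G⋆v)⋆w)⋆v` the local complementation along an edge `{v,w}`:
`{v,w}` is an edge of `G'`, and every other vertex `j` is adjacent to `v` in `G'` iff it was
adjacent to `w` in `G`, and adjacent to `w` in `G'` iff it was adjacent to `v` in `G`. -/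
theorem localComp_edge_adj {V : Type*} [Fintype V] (G : SimpleGraph V) (v w : V)
    (hne : v ≠ w) (hvw : G.Adj v w) :
    (localComp (localComp (localComp G v) w) v).Adj v w ∧
    ∀ j, j ≠ v → j ≠ w →
      ((localComp (localComp (localComp G v) w) v).Adj j v ↔ G.Adj j w) ∧
      ((localComp (localComp (localComp G v) w) v).Adj j w ↔ G.Adj j v) := by
  have hlc : ∀ (H : SimpleGraph V) (u a b : V),
      (localComp H u).Adj a b ↔ ((H.Adj a u ∧ H.Adj b u ∧ a ≠ b ∧ ¬ H.Adj a b) ∨ (H.Adj a b ∧ ¬ (H.Adj a u ∧ H.Adj b u))) := fun _ _ _ _ => Iff.rfl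
  have hwv := hvw.symm
  have hvv : ¬ G.Adj v v := G.loopless.irrefl v
  have hww : ¬ G.Adj w w := G.loopless.irrefl w
  have hne' : w ≠ v := hne.symm
  constructor
  · simp only [hlc]
    tauto
  · intro j hjv hjw
    constructor
    · simp only [hlc]
      simp only [hvv, hww, hvw, hwv, hne, hne', hjv, hjw, ne_eq, not_true, not_false_eq_true,
        true_and, and_true, false_and, and_false, or_false, false_or, not_false_iff,
        iff_true, true_iff, not_true_eq_false]
      tauto
    · simp only [hlc]
      simp only [hvv, hww, hvw, hwv, hne, hne', hjv, hjw, ne_eq, not_true, not_false_eq_true,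
        true_and, and_true, false_and, and_false, or_false, false_or, not_false_iff,
        iff_true, true_iff, not_true_eq_false]
      tauto
end
end

section
/- Suppose (G, A) is an rGS-LC datum on n qubits containing adjacent vertices p and q such that A_p = X_{π/2}·Z_ε with ε ∈ {π/2, 3π/2} and A_q = Z_δ with δ ∈ {π/2, 3π/2}. Let G' = ((G⋆p)⋆q)⋆p be the local complementation of G along the edge {p,q}. Then there exist an rGS-LC datum (G', A') on n qubits and a complex unit scalar c such that |G'; A'⟩ = c · |G; A⟩. -/
open scoped Matrix BigOperators
open scoped Classical

noncomputable section

/-! ### Auxiliary lemmas: single-qubit matrix values -/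

lemma fin2_cases (c : Fin 2) : c = 0 ∨ c = 1 := by fin_cases c <;> simp

lemma mk2_congr {a b c d a' b' c' d' : ℂ} (h1 : a = a') (h2 : b = b') (h3 : c = c')
    (h4 : d = d') : !![a,b;c,d] = !![a',b';c',d'] := by rw [h1,h2,h3,h4]

lemma exp_real_mul_I (θ : ℝ) :
    Complex.exp (θ * Complex.I) = (Real.cos θ : ℂ) + (Real.sin θ : ℂ) * Complex.I := by
  rw [Complex.exp_mul_I, Complex.ofReal_cos, Complex.ofReal_sin]

lemma exp_pi_div_two_I : Complex.exp ((Real.pi/2 : ℝ) * Complex.I) = Complex.I := by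
  rw [exp_real_mul_I]; simp

lemma exp_neg_pi_div_two_I : Complex.exp ((-(Real.pi/2) : ℝ) * Complex.I) = -Complex.I := by
  rw [exp_real_mul_I]; simp

lemma exp_pi_I' : Complex.exp ((Real.pi : ℝ) * Complex.I) = -1 := by
  rw [exp_real_mul_I]; simp

lemma exp_three_pi_div_two_I :
    Complex.exp ((3*Real.pi/2 : ℝ) * Complex.I) = -Complex.I := by
  have h : ((3*Real.pi/2 : ℝ) : ℂ) * Complex.I
      = (Real.pi : ℝ) * Complex.I + ((Real.pi/2) : ℝ) * Complex.I := by
    push_cast; ring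
  rw [h, Complex.exp_add, exp_pi_I', exp_pi_div_two_I]; ring

lemma Zrot_pi_div_two : Zrot (Real.pi/2) = !![1, 0; 0, Complex.I] := by
  rw [Zrot, exp_pi_div_two_I]

lemma Zrot_pi : Zrot Real.pi = PauliZ := by
  rw [Zrot, exp_pi_I', PauliZ]

lemma Zrot_three_pi_div_two : Zrot (3*Real.pi/2) = !![1, 0; 0, -Complex.I] := by
  rw [Zrot, exp_three_pi_div_two_I]

lemma Zrot_zero : Zrot 0 = 1 := by
  rw [Zrot]
  norm_num
  exact Matrix.one_fin_two.symm

lemma sqrt_two_mul_self_c :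
    ((1 / Real.sqrt 2 : ℝ) : ℂ) * ((1 / Real.sqrt 2 : ℝ) : ℂ) = 1/2 := by
  norm_cast
  rw [div_mul_div_comm, Real.mul_self_sqrt (by norm_num : (0:ℝ) ≤ 2)]
  norm_num

lemma Xrot_eq (θ : ℝ) :
    Xrot θ = (1/2 : ℂ) •
      !![1 + Complex.exp (θ * Complex.I), 1 - Complex.exp (θ * Complex.I);
         1 - Complex.exp (θ * Complex.I), 1 + Complex.exp (θ * Complex.I)] := by
  unfold Xrot Hmat Zrot
  rw [Matrix.smul_mul, Matrix.smul_mul, Matrix.mul_smul, smul_smul, sqrt_two_mul_self_c,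
    Matrix.mul_fin_two, Matrix.mul_fin_two]
  congr 1
  exact mk2_congr (by ring) (by ring) (by ring) (by ring)

lemma Xrot_pi_div_two :
    Xrot (Real.pi/2) = (1/2 : ℂ) •
      !![1 + Complex.I, 1 - Complex.I; 1 - Complex.I, 1 + Complex.I] := by
  rw [Xrot_eq, exp_pi_div_two_I]

lemma Xrot_neg_pi_div_two :
    Xrot (-(Real.pi/2)) = (1/2 : ℂ) •
      !![1 - Complex.I, 1 + Complex.I; 1 + Complex.I, 1 - Complex.I] := by
  rw [Xrot_eq, exp_neg_pi_div_two_I]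
  congr 1
  exact mk2_congr (by ring) (by ring) (by ring) (by ring)
/-! ### Phase products and local complementation of edge sets -/

lemma czPhase_mk {n : ℕ} (u w : Fin n) (x : Fin n → Fin 2) :
    czPhase s(u, w) x = (-1 : ℂ) ^ ((x u : ℕ) * (x w : ℕ)) := by
  simp [czPhase]

lemma czPhase_mul_self {n : ℕ} (e : Sym2 (Fin n)) (x : Fin n → Fin 2) :
    czPhase e x * czPhase e x = 1 := by
  induction e using Sym2.ind with
  | _ u w =>
    rw [czPhase_mk, ← pow_add]
    exact Even.neg_one_pow ⟨_, rfl⟩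

lemma prod_symmDiff_sq_one {α : Type*} [DecidableEq α] (s t : Finset α) (f : α → ℂ)
    (hf : ∀ e, f e * f e = 1) :
    ∏ e ∈ symmDiff s t, f e = (∏ e ∈ s, f e) * ∏ e ∈ t, f e := by
  have h1 : (∏ e ∈ s ∪ t, f e) * ∏ e ∈ s ∩ t, f e = (∏ e ∈ s, f e) * ∏ e ∈ t, f e :=
    Finset.prod_union_inter
  have h2 : (∏ e ∈ (s ∪ t) \ (s ∩ t), f e) * ∏ e ∈ s ∩ t, f e = ∏ e ∈ s ∪ t, f e :=
    Finset.prod_sdiff Finset.inter_subset_union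
  have h3 : (∏ e ∈ s ∩ t, f e) * (∏ e ∈ s ∩ t, f e) = 1 := by
    rw [← Finset.prod_mul_distrib]
    exact Finset.prod_eq_one fun e _ => hf e
  have hsd : symmDiff s t = (s ∪ t) \ (s ∩ t) := by
    rw [symmDiff_eq_sup_sdiff_inf]; rfl
  rw [hsd]
  calc ∏ e ∈ (s ∪ t) \ (s ∩ t), f e
      = (∏ e ∈ (s ∪ t) \ (s ∩ t), f e) * ((∏ e ∈ s ∩ t, f e) * (∏ e ∈ s ∩ t, f e)) := by
        rw [h3, mul_one]
    _ = ((∏ e ∈ (s ∪ t) \ (s ∩ t), f e) * ∏ e ∈ s ∩ t, f e) * ∏ e ∈ s ∩ t, f e := by ring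
    _ = (∏ e ∈ s, f e) * ∏ e ∈ t, f e := by rw [h2, h1]

lemma localComp_adj {V : Type*} (G : SimpleGraph V) (v a b : V) :
    (localComp G v).Adj a b ↔
      ((G.Adj a v ∧ G.Adj b v ∧ a ≠ b ∧ ¬ G.Adj a b) ∨
        (G.Adj a b ∧ ¬ (G.Adj a v ∧ G.Adj b v))) := Iff.rfl

lemma edgeFinset_localComp {n : ℕ} (G : SimpleGraph (Fin n)) (v : Fin n) :
    (localComp G v).edgeFinset
      = symmDiff G.edgeFinset ((G.neighborFinset v).sym2.filter (fun e => ¬ e.IsDiag)) := by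
  ext e
  induction e using Sym2.ind with
  | _ a b =>
    simp only [SimpleGraph.mem_edgeFinset, SimpleGraph.mem_edgeSet, Finset.mem_symmDiff,
      Finset.mem_filter, Finset.mk_mem_sym2_iff, SimpleGraph.mem_neighborFinset,
      Sym2.mk_isDiag_iff, localComp_adj]
    have h1 : G.Adj a v ↔ G.Adj v a := G.adj_comm a v
    have h2 : G.Adj b v ↔ G.Adj v b := G.adj_comm b v
    have h3 : G.Adj a b → a ≠ b := fun h => h.ne
    tauto

lemma prod_sym2_filter {n : ℕ} (x : Fin n → Fin 2) (S : Finset (Fin n)) :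
    ∏ e ∈ S.sym2.filter (fun e => ¬ e.IsDiag), czPhase e x
      = Complex.I ^ ((∑ u ∈ S, (x u : ℕ)) * ((∑ u ∈ S, (x u : ℕ)) - 1)) := by
  induction S using Finset.induction_on with
  | empty => simp
  | @insert a S ha ih =>
    have hsplit : (insert a S).sym2.filter (fun e => ¬ e.IsDiag)
        = (S.image (fun b => s(a, b))) ∪ S.sym2.filter (fun e => ¬ e.IsDiag) := by
      rw [Finset.sym2_insert]
      ext e
      induction e using Sym2.ind with
      | _ c d =>
        simp only [Finset.mem_filter, Finset.mem_union, Finset.mem_image,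
          Finset.mem_insert, Sym2.mk_isDiag_iff, Finset.mk_mem_sym2_iff]
        constructor
        · rintro ⟨hcd | hmem, hdiag⟩
          · obtain ⟨b, hb, hbe⟩ := hcd
            rcases hb with rfl | hb
            · exact absurd (by rw [← Sym2.mk_isDiag_iff, ← hbe,
                Sym2.mk_isDiag_iff]) hdiag
            · exact Or.inl ⟨b, hb, hbe⟩
          · exact Or.inr ⟨hmem, hdiag⟩
        · rintro (⟨b, hb, hbe⟩ | ⟨hmem, hdiag⟩)
          · constructor
            · exact Or.inl ⟨b, Or.inr hb, hbe⟩
            · intro hdiag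
              have hab : b = a := by
                have : Sym2.IsDiag s(a, b) := by
                  rw [hbe, Sym2.mk_isDiag_iff]; exact hdiag
                exact (Sym2.mk_isDiag_iff.mp this).symm
              exact ha (hab ▸ hb)
          · exact ⟨Or.inr hmem, hdiag⟩
    have hdisj : Disjoint (S.image (fun b => s(a, b)))
        (S.sym2.filter (fun e => ¬ e.IsDiag)) := by
      rw [Finset.disjoint_left]
      rintro e he he'
      obtain ⟨b, hb, rfl⟩ := Finset.mem_image.mp he
      rw [Finset.mem_filter, Finset.mk_mem_sym2_iff] at he'
      exact ha he'.1.1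
    rw [hsplit, Finset.prod_union hdisj]
    rw [Finset.prod_image (fun b hb c hc h => Sym2.congr_right.mp h)]
    rw [ih]
    have hval : ∀ b ∈ S, czPhase s(a, b) x = (-1 : ℂ) ^ ((x a : ℕ) * (x b : ℕ)) :=
      fun b _ => czPhase_mk a b x
    rw [Finset.prod_congr rfl hval]
    have hpow : ∏ b ∈ S, ((-1 : ℂ)) ^ ((x a : ℕ) * (x b : ℕ))
        = (-1 : ℂ) ^ ((x a : ℕ) * ∑ u ∈ S, (x u : ℕ)) := by
      rw [Finset.prod_pow_eq_pow_sum, Finset.mul_sum]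
    rw [hpow, Finset.sum_insert ha]
    set k := ∑ u ∈ S, (x u : ℕ) with hk
    rcases fin2_cases (x a) with h | h <;> rw [h]
    · simp
    · simp only [Fin.val_one, one_mul]
      have harith : (1 + k) * (1 + k - 1) = k * (k - 1) + 2 * k := by
        rcases k with _ | k'
        · rfl
        · have h1 : 1 + (k' + 1) - 1 = k' + 1 := by omega
          have h2 : (k' + 1) - 1 = k' := by omega
          rw [h1, h2]; ring
      rw [harith, pow_add,
        show Complex.I ^ (2 * k) = (Complex.I ^ 2) ^ k from pow_mul _ 2 k, Complex.I_sq]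
      ring
/-! ### Splitting the edge-phase product at a vertex -/

lemma prod_incident {n : ℕ} (G : SimpleGraph (Fin n)) (v : Fin n) (z : Fin n → Fin 2) :
    ∏ e ∈ G.edgeFinset.filter (fun e => v ∈ e), czPhase e z
      = ∏ u ∈ G.neighborFinset v, (-1 : ℂ) ^ ((z v : ℕ) * (z u : ℕ)) := by
  refine (Finset.prod_bij (fun u _ => s(v, u)) ?_ ?_ ?_ ?_).symm
  · intro u hu
    rw [SimpleGraph.mem_neighborFinset] at hu
    simp only [Finset.mem_filter, SimpleGraph.mem_edgeFinset, SimpleGraph.mem_edgeSet]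
    exact ⟨hu, Sym2.mem_mk_left v u⟩
  · intro u1 h1 u2 h2 h
    exact Sym2.congr_right.mp h
  · intro e he
    simp only [Finset.mem_filter, SimpleGraph.mem_edgeFinset, SimpleGraph.mem_edgeSet] at he
    obtain ⟨hadj, hmem⟩ := he
    induction e using Sym2.ind with
    | _ a c =>
      rcases Sym2.mem_iff.mp hmem with rfl | rfl
      · exact ⟨c, by rw [SimpleGraph.mem_neighborFinset]; exact hadj, rfl⟩
      · exact ⟨a, by rw [SimpleGraph.mem_neighborFinset]; exact hadj.symm, Sym2.eq_swap⟩
  · intro u hu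
    rw [czPhase_mk]

lemma prod_cz_split {n : ℕ} (G : SimpleGraph (Fin n)) (v : Fin n) (y : Fin n → Fin 2) :
    ∏ e ∈ G.edgeFinset, czPhase e y
      = (-1 : ℂ) ^ ((y v : ℕ) * ∑ u ∈ G.neighborFinset v, (y u : ℕ))
        * ∏ e ∈ G.edgeFinset, czPhase e (Function.update y v 0) := by
  rw [← Finset.prod_filter_mul_prod_filter_not G.edgeFinset (fun e => v ∈ e)
    (fun e => czPhase e y),
    ← Finset.prod_filter_mul_prod_filter_not G.edgeFinset (fun e => v ∈ e)
    (fun e => czPhase e (Function.update y v 0))]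
  have hrest : ∀ e ∈ G.edgeFinset.filter (fun e => ¬ v ∈ e),
      czPhase e (Function.update y v 0) = czPhase e y := by
    intro e he
    rw [Finset.mem_filter] at he
    induction e using Sym2.ind with
    | _ a c =>
      have hav : a ≠ v := fun h => he.2 (h ▸ Sym2.mem_mk_left a c)
      have hcv : c ≠ v := fun h => he.2 (h ▸ Sym2.mem_mk_right a c)
      rw [czPhase_mk, czPhase_mk, Function.update_of_ne hav, Function.update_of_ne hcv]
  rw [Finset.prod_congr rfl hrest]
  have h1 : ∏ e ∈ G.edgeFinset.filter (fun e => v ∈ e), czPhase e y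
      = (-1 : ℂ) ^ ((y v : ℕ) * ∑ u ∈ G.neighborFinset v, (y u : ℕ)) := by
    rw [prod_incident, Finset.mul_sum, ← Finset.prod_pow_eq_pow_sum]
  have h2 : ∏ e ∈ G.edgeFinset.filter (fun e => v ∈ e), czPhase e (Function.update y v 0)
      = 1 := by
    rw [prod_incident]
    apply Finset.prod_eq_one
    intro u hu
    rw [Function.update_self]
    simp
  rw [h1, h2, one_mul]

/-! ### Tensor products and single-site operators -/

lemma applyOn_mulVec {n : ℕ} (v : Fin n) (M : Matrix (Fin 2) (Fin 2) ℂ) (ψ : QState n)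
    (x : Fin n → Fin 2) :
    (applyOn v M).mulVec ψ x = ∑ b : Fin 2, M (x v) b * ψ (Function.update x v b) := by
  unfold Matrix.mulVec applyOn dotProduct
  simp only [Matrix.of_apply]
  have key : ∀ y : Fin n → Fin 2,
      (if ∀ u, u ≠ v → x u = y u then M (x v) (y v) else 0) * ψ y
        = ∑ b : Fin 2, if y = Function.update x v b then M (x v) b * ψ y else 0 := by
    intro y
    by_cases h : ∀ u, u ≠ v → x u = y u
    · rw [if_pos h]
      have hy : y = Function.update x v (y v) := by
        funext u
        by_cases hu : u = v
        · subst hu; rw [Function.update_self]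
        · rw [Function.update_of_ne hu]
          exact (h u hu).symm
      rw [Finset.sum_eq_single (y v)]
      · rw [if_pos hy]
      · intro b _ hb
        rw [if_neg]
        intro hc
        apply hb
        rw [hc, Function.update_self]
      · intro hmem
        exact absurd (Finset.mem_univ _) hmem
    · rw [if_neg h, zero_mul]
      symm
      apply Finset.sum_eq_zero
      intro b _
      rw [if_neg]
      intro hc
      apply h
      intro u hu
      rw [hc, Function.update_of_ne hu]
  rw [Finset.sum_congr rfl (fun y _ => key y), Finset.sum_comm]
  apply Finset.sum_congr rfl
  intro b _
  rw [Finset.sum_eq_single (Function.update x v b)]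
  · rw [if_pos rfl]
  · intro y _ hy
    rw [if_neg hy]
  · intro hmem
    exact absurd (Finset.mem_univ _) hmem

lemma tensorOp_mul {n : ℕ} (A B : Fin n → Matrix (Fin 2) (Fin 2) ℂ) :
    tensorOp A * tensorOp B = tensorOp (fun v => A v * B v) := by
  ext x y
  rw [Matrix.mul_apply]
  show _ = ∏ j, (A j * B j) (x j) (y j)
  simp only [Matrix.mul_apply]
  rw [Finset.prod_univ_sum, Fintype.piFinset_univ]
  apply Finset.sum_congr rfl
  intro z _
  simp only [tensorOp, Matrix.of_apply]
  exact Finset.prod_mul_distrib.symm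

lemma tensorOp_smul {n : ℕ} (c : Fin n → ℂ) (A : Fin n → Matrix (Fin 2) (Fin 2) ℂ) :
    tensorOp (fun v => c v • A v) = (∏ v, c v) • tensorOp A := by
  ext x y
  simp only [tensorOp, Matrix.of_apply, Matrix.smul_apply, smul_eq_mul]
  rw [← Finset.prod_mul_distrib]

lemma tensorOp_one {n : ℕ} :
    tensorOp (fun _ : Fin n => (1 : Matrix (Fin 2) (Fin 2) ℂ)) = 1 := by
  ext x y
  simp only [tensorOp, Matrix.of_apply]
  by_cases h : x = y
  · subst h
    rw [Matrix.one_apply_eq]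
    exact Finset.prod_eq_one fun j _ => Matrix.one_apply_eq _
  · rw [Matrix.one_apply_ne h]
    obtain ⟨j, hj⟩ : ∃ j, x j ≠ y j := by
      by_contra hc
      push_neg at hc
      exact h (funext hc)
    exact Finset.prod_eq_zero (Finset.mem_univ j) (Matrix.one_apply_ne hj)

lemma offdiag_zero {D : Matrix (Fin 2) (Fin 2) ℂ} (hD0 : D 0 1 = 0) (hD1 : D 1 0 = 0)
    {a b : Fin 2} (h : a ≠ b) : D a b = 0 := by
  fin_cases a <;> fin_cases b <;> simp_all

lemma tensorOp_ite_eq {n : ℕ} (v : Fin n) (M D : Matrix (Fin 2) (Fin 2) ℂ)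
    (hD0 : D 0 1 = 0) (hD1 : D 1 0 = 0) (S : Finset (Fin n)) (hv : v ∉ S) :
    tensorOp (fun u => if u = v then M else if u ∈ S then D else 1)
      = applyOn v M * Matrix.diagonal (fun x => ∏ u ∈ S, D (x u) (x u)) := by
  ext x y
  rw [Matrix.mul_diagonal]
  simp only [tensorOp, Matrix.of_apply, applyOn]
  rw [← Finset.mul_prod_erase Finset.univ _ (Finset.mem_univ v), if_pos rfl]
  by_cases h : ∀ u, u ≠ v → x u = y u
  · rw [if_pos h]
    have hcongr : ∀ u ∈ Finset.univ.erase v,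
        (if u = v then M else if u ∈ S then D else 1) (x u) (y u)
          = if u ∈ S then D (y u) (y u) else 1 := by
      intro u hu
      have huv : u ≠ v := Finset.ne_of_mem_erase hu
      rw [if_neg huv, h u huv]
      by_cases hS : u ∈ S
      · rw [if_pos hS, if_pos hS]
      · rw [if_neg hS, if_neg hS, Matrix.one_apply_eq]
    rw [Finset.prod_congr rfl hcongr]
    have hfilter : Finset.filter (fun u => u ∈ S) (Finset.univ.erase v) = S := by
      ext u
      constructor
      · intro hmem
        exact (Finset.mem_filter.mp hmem).2
      · intro hS
        exact Finset.mem_filter.mpr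
          ⟨Finset.mem_erase.mpr ⟨fun hc => hv (hc ▸ hS), Finset.mem_univ u⟩, hS⟩
    rw [← Finset.prod_filter, hfilter]
  · rw [if_neg h, zero_mul]
    push_neg at h
    obtain ⟨u0, hu0, hxy⟩ := h
    apply mul_eq_zero_of_right
    apply Finset.prod_eq_zero (Finset.mem_erase.mpr ⟨hu0, Finset.mem_univ u0⟩)
    rw [if_neg hu0]
    by_cases hS : u0 ∈ S
    · rw [if_pos hS]
      exact offdiag_zero hD0 hD1 hxy
    · rw [if_neg hS]
      exact Matrix.one_apply_ne hxy
/-! ### Scalar bookkeeping -/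

lemma neg_I_sq : (-Complex.I) ^ 2 = -1 := by
  rw [neg_sq, Complex.I_sq]

lemma I_pow_val (k : ℕ) :
    Complex.I ^ (k * (k - 1)) * (-Complex.I) ^ k
      = if Even k then 1 else -Complex.I := by
  rcases k with _ | j
  · simp
  · rcases Nat.even_or_odd j with ⟨m, rfl⟩ | ⟨m, rfl⟩
    · -- k = m + m + 1, odd
      have hnotev : ¬ Even (m + m + 1) := by
        simp [Nat.even_add_one, Nat.even_add]
      rw [if_neg hnotev]
      have h1 : (m + m + 1) * (m + m + 1 - 1) = 2 * ((2 * (m * m) + m)) := by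
        simp only [Nat.add_sub_cancel]
        ring
      have h2 : (-Complex.I) ^ (m + m + 1) = (-1 : ℂ) ^ m * -Complex.I := by
        rw [pow_succ, show m + m = 2 * m by ring, pow_mul, neg_I_sq]
      rw [h1, pow_mul, Complex.I_sq, h2, pow_add, pow_mul, neg_one_sq, one_pow, one_mul]
      rw [show ((-1:ℂ)^m * ((-1:ℂ)^m * -Complex.I)) = ((-1:ℂ)^m * (-1:ℂ)^m) * -Complex.I by ring,
        ← pow_add, Even.neg_one_pow ⟨m, rfl⟩, one_mul]
    · -- k = 2m + 1 + 1, even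
      have hev : Even (2 * m + 1 + 1) := by
        refine ⟨m + 1, by ring⟩
      rw [if_pos hev]
      have h1 : (2 * m + 1 + 1) * (2 * m + 1 + 1 - 1) = 2 * ((2 * (m * m + m)) + (m + 1)) := by
        simp only [Nat.add_sub_cancel]
        ring
      have h2 : (-Complex.I) ^ (2 * m + 1 + 1) = (-1 : ℂ) ^ (m + 1) := by
        rw [show 2 * m + 1 + 1 = 2 * (m + 1) by ring, pow_mul, neg_I_sq]
      rw [h1, pow_mul, Complex.I_sq, h2, pow_add, pow_mul, neg_one_sq, one_pow, one_mul]
      rw [← pow_add, Even.neg_one_pow ⟨m + 1, by ring⟩]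

lemma key_scalar (a : Fin 2) (k : ℕ) :
    Xrot (-(Real.pi/2)) a 0 + Xrot (-(Real.pi/2)) a 1 * (-1 : ℂ) ^ k
      = (-1 : ℂ) ^ ((a : ℕ) * k) * (Complex.I ^ (k * (k - 1)) * (-Complex.I) ^ k) := by
  rw [I_pow_val, Xrot_neg_pi_div_two]
  rcases Nat.even_or_odd k with hk | hk
  · rw [if_pos hk, hk.neg_one_pow]
    have h2 : (-1 : ℂ) ^ ((a : ℕ) * k) = 1 := by
      rcases fin2_cases a with h | h <;> rw [h] <;> simp [hk.neg_one_pow]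
    rw [h2]
    fin_cases a <;> simp <;> ring
  · rw [if_neg (Nat.not_even_iff_odd.mpr hk), hk.neg_one_pow]
    rcases fin2_cases a with h | h <;> rw [h]
    · simp <;> ring
    · simp only [Fin.val_one, one_mul, hk.neg_one_pow]
      simp <;> ring

/-! ### Graph state transformation under local complementation; stabilizers -/

lemma graphState_apply {n : ℕ} (G : SimpleGraph (Fin n)) (x : Fin n → Fin 2) :
    graphState G x = (∏ e ∈ G.edgeFinset, czPhase e x) * ((1 / Real.sqrt 2 : ℝ) : ℂ) ^ n := by
  unfold graphState CZofEdges plusState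
  rw [Matrix.mulVec_diagonal]

lemma sum_update_eq {n : ℕ} (G : SimpleGraph (Fin n)) (v : Fin n) (x : Fin n → Fin 2)
    (b : Fin 2) :
    ∑ u ∈ G.neighborFinset v, ((Function.update x v b u : Fin 2) : ℕ)
      = ∑ u ∈ G.neighborFinset v, ((x u : Fin 2) : ℕ) := by
  apply Finset.sum_congr rfl
  intro u hu
  have hadf := (SimpleGraph.mem_neighborFinset G v u).mp hu
  have huv : u ≠ v := fun hc => G.loopless.irrefl v (by rw [hc] at hadf; exact hadf)
  rw [Function.update_of_ne huv]

lemma graphState_localComp {n : ℕ} (G : SimpleGraph (Fin n)) (v : Fin n) :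
    graphState (localComp G v)
      = (tensorOp (fun u => if u = v then Xrot (-(Real.pi/2))
          else if u ∈ G.neighborFinset v then Zrot (Real.pi/2) else 1)).mulVec
          (graphState G) := by
  rw [tensorOp_ite_eq v _ _ (by rw [Zrot_pi_div_two]; norm_num)
      (by rw [Zrot_pi_div_two]; norm_num) (G.neighborFinset v) (by simp)]
  rw [← Matrix.mulVec_mulVec]
  funext x
  rw [applyOn_mulVec, Fin.sum_univ_two]
  have hdiag : ∀ y : Fin n → Fin 2, (Matrix.diagonal fun z : Fin n → Fin 2 =>
      ∏ u ∈ G.neighborFinset v, Zrot (Real.pi/2) (z u) (z u)).mulVec (graphState G) y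
      = Complex.I ^ (∑ u ∈ G.neighborFinset v, ((y u : Fin 2) : ℕ)) * graphState G y := by
    intro y
    rw [Matrix.mulVec_diagonal]
    congr 1
    rw [← Finset.prod_pow_eq_pow_sum]
    apply Finset.prod_congr rfl
    intro u _
    rcases fin2_cases (y u) with h | h <;> rw [h] <;> simp [Zrot_pi_div_two]
  rw [hdiag, hdiag, sum_update_eq, sum_update_eq]
  have hkdef : True := trivial
  rw [graphState_apply (localComp G v) x, graphState_apply G (Function.update x v 0),
    graphState_apply G (Function.update x v 1)]
  rw [edgeFinset_localComp,
    prod_symmDiff_sq_one _ _ _ (fun e => czPhase_mul_self e x),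
    prod_sym2_filter]
  have hx := prod_cz_split G v x
  have hb0 := prod_cz_split G v (Function.update x v 0)
  have hb1 := prod_cz_split G v (Function.update x v 1)
  rw [Function.update_self, Function.update_idem, sum_update_eq] at hb1
  rw [hx, hb1]
  have hks := key_scalar (x v) (∑ u ∈ G.neighborFinset v, ((x u : Fin 2) : ℕ))
  have hIk : (-Complex.I) ^ (∑ u ∈ G.neighborFinset v, ((x u : Fin 2) : ℕ))
      * Complex.I ^ (∑ u ∈ G.neighborFinset v, ((x u : Fin 2) : ℕ)) = 1 := by
    rw [← mul_pow]
    norm_num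
  simp only [Fin.val_one, one_mul]
  linear_combination (-(Complex.I ^ (∑ u ∈ G.neighborFinset v, ((x u : Fin 2) : ℕ))
      * (∏ e ∈ G.edgeFinset, czPhase e (Function.update x v 0))
      * ((1 / Real.sqrt 2 : ℝ) : ℂ) ^ n)) * hks
    - ((-1 : ℂ) ^ (((x v : Fin 2) : ℕ) * (∑ u ∈ G.neighborFinset v, ((x u : Fin 2) : ℕ)))
      * Complex.I ^ ((∑ u ∈ G.neighborFinset v, ((x u : Fin 2) : ℕ))
          * ((∑ u ∈ G.neighborFinset v, ((x u : Fin 2) : ℕ)) - 1))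
      * (∏ e ∈ G.edgeFinset, czPhase e (Function.update x v 0))
      * ((1 / Real.sqrt 2 : ℝ) : ℂ) ^ n) * hIk

lemma stab_fix {n : ℕ} (G : SimpleGraph (Fin n)) (v : Fin n) :
    (tensorOp (fun u => if u = v then PauliX
        else if u ∈ G.neighborFinset v then PauliZ else 1)).mulVec (graphState G)
      = graphState G := by
  rw [tensorOp_ite_eq v _ _ (by norm_num [PauliZ]) (by norm_num [PauliZ])
      (G.neighborFinset v) (by simp)]
  rw [← Matrix.mulVec_mulVec]
  funext x
  rw [applyOn_mulVec, Fin.sum_univ_two]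
  have hdiag : ∀ y : Fin n → Fin 2, (Matrix.diagonal fun z : Fin n → Fin 2 =>
      ∏ u ∈ G.neighborFinset v, PauliZ (z u) (z u)).mulVec (graphState G) y
      = (-1 : ℂ) ^ (∑ u ∈ G.neighborFinset v, ((y u : Fin 2) : ℕ)) * graphState G y := by
    intro y
    rw [Matrix.mulVec_diagonal]
    congr 1
    rw [← Finset.prod_pow_eq_pow_sum]
    apply Finset.prod_congr rfl
    intro u _
    rcases fin2_cases (y u) with h | h <;> rw [h] <;> simp [PauliZ]
  rw [hdiag, hdiag, sum_update_eq, sum_update_eq]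
  rw [graphState_apply G x, graphState_apply G (Function.update x v 0),
    graphState_apply G (Function.update x v 1)]
  have hx := prod_cz_split G v x
  have hb0 := prod_cz_split G v (Function.update x v 0)
  have hb1 := prod_cz_split G v (Function.update x v 1)
  rw [Function.update_self, Function.update_idem, sum_update_eq] at hb1
  rw [hx, hb1]
  have hkk : (-1 : ℂ) ^ (∑ u ∈ G.neighborFinset v, ((x u : Fin 2) : ℕ))
      * (-1 : ℂ) ^ (∑ u ∈ G.neighborFinset v, ((x u : Fin 2) : ℕ)) = 1 := by
    rw [← pow_add]
    exact Even.neg_one_pow ⟨_, rfl⟩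
  have hP00 : PauliX 0 0 = 0 := by norm_num [PauliX]
  have hP01 : PauliX 0 1 = 1 := by norm_num [PauliX]
  have hP10 : PauliX 1 0 = 1 := by norm_num [PauliX]
  have hP11 : PauliX 1 1 = 0 := by norm_num [PauliX]
  rcases fin2_cases (x v) with h | h <;> rw [h] <;>
    simp only [hP00, hP01, hP10, hP11, Fin.val_zero, Fin.val_one, zero_mul, one_mul,
      pow_zero, mul_one]
  · linear_combination ((∏ e ∈ G.edgeFinset, czPhase e (Function.update x v 0))
      * ((1 / Real.sqrt 2 : ℝ) : ℂ) ^ n) * hkk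
  · linear_combination
/-! ### Two-by-two matrix algebra for vertex operators -/

lemma diag2_mul (a b : ℂ) : !![1,0;0,a] * !![(1:ℂ),0;0,b] = !![1,0;0,a*b] := by
  rw [Matrix.mul_fin_two]
  exact mk2_congr (by ring) (by ring) (by ring) (by ring)

lemma PauliZ_eq : PauliZ = !![(1:ℂ),0;0,-1] := rfl

lemma Zp_mul_Zp : Zrot (Real.pi/2) * Zrot (Real.pi/2) = PauliZ := by
  rw [Zrot_pi_div_two, diag2_mul, PauliZ_eq]
  exact mk2_congr rfl rfl rfl (by rw [Complex.I_mul_I])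

lemma PZ_mul_PZ : PauliZ * PauliZ = 1 := by
  rw [PauliZ_eq, diag2_mul]
  rw [show (-1 : ℂ) * -1 = 1 by ring]
  exact Matrix.one_fin_two.symm

lemma Zp_mul_Zp_assoc (M : Matrix (Fin 2) (Fin 2) ℂ) :
    Zrot (Real.pi/2) * (Zrot (Real.pi/2) * M) = PauliZ * M := by
  rw [← mul_assoc, Zp_mul_Zp]

lemma PZ_mul_PZ_assoc (M : Matrix (Fin 2) (Fin 2) ℂ) :
    PauliZ * (PauliZ * M) = M := by
  rw [← mul_assoc, PZ_mul_PZ, one_mul]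

lemma redmat1 : Xrot (Real.pi/2) * Zrot (Real.pi/2)
    = (1/2 : ℂ) • !![1+Complex.I, 1+Complex.I; 1-Complex.I, Complex.I-1] := by
  rw [Xrot_pi_div_two, Zrot_pi_div_two, Matrix.smul_mul, Matrix.mul_fin_two]
  congr 1
  exact mk2_congr (by ring) (by linear_combination -Complex.I_sq)
    (by ring) (by linear_combination Complex.I_sq)

lemma redmat3 : Xrot (Real.pi/2) * Zrot (3*Real.pi/2)
    = (1/2 : ℂ) • !![1+Complex.I, -(1+Complex.I); 1-Complex.I, 1-Complex.I] := by
  rw [Xrot_pi_div_two, Zrot_three_pi_div_two, Matrix.smul_mul, Matrix.mul_fin_two]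
  congr 1
  exact mk2_congr (by ring) (by linear_combination Complex.I_sq)
    (by ring) (by linear_combination -Complex.I_sq)

lemma red_entry {M : Matrix (Fin 2) (Fin 2) ℂ} (h : hasRedNode M) : M 0 1 ≠ 0 := by
  rcases h with h | h <;> subst h
  · rw [redmat1]
    intro hc
    simp at hc
    rw [add_eq_zero_iff_eq_neg] at hc
    have := congrArg Complex.re hc
    norm_num at this
  · rw [redmat3]
    intro hc
    simp at hc
    rw [add_eq_zero_iff_eq_neg] at hc
    have := congrArg Complex.re hc
    norm_num at this

lemma green_not_red (θ : ℝ) : ¬ hasRedNode (Zrot θ) := by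
  intro h
  have := red_entry h
  apply this
  simp [Zrot]

lemma red1_is_red : hasRedNode (Xrot (Real.pi/2) * Zrot (Real.pi/2)) := Or.inl rfl
lemma red3_is_red : hasRedNode (Xrot (Real.pi/2) * Zrot (3*Real.pi/2)) := Or.inr rfl

lemma red1_mem : Xrot (Real.pi/2) * Zrot (Real.pi/2) ∈ Rset := Or.inr (Or.inl rfl)
lemma red3_mem : Xrot (Real.pi/2) * Zrot (3*Real.pi/2) ∈ Rset := Or.inr (Or.inr rfl)

lemma Zrot_coe_val (k : Fin 4) : ∃ θ : ℝ, Zrot ((k : ℕ) * (Real.pi/2)) = Zrot θ := ⟨_, rfl⟩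

lemma red1_mul_PZ : (Xrot (Real.pi/2) * Zrot (Real.pi/2)) * PauliZ
    = Xrot (Real.pi/2) * Zrot (3*Real.pi/2) := by
  rw [mul_assoc]
  congr 1
  rw [Zrot_pi_div_two, Zrot_three_pi_div_two, PauliZ_eq, diag2_mul]
  exact mk2_congr rfl rfl rfl (by ring)

lemma red3_mul_PZ : (Xrot (Real.pi/2) * Zrot (3*Real.pi/2)) * PauliZ
    = Xrot (Real.pi/2) * Zrot (Real.pi/2) := by
  rw [mul_assoc]
  congr 1
  rw [Zrot_pi_div_two, Zrot_three_pi_div_two, PauliZ_eq, diag2_mul]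
  exact mk2_congr rfl rfl rfl (by ring)

lemma green_mul_PZ (k : Fin 4) :
    Zrot ((k : ℕ) * (Real.pi/2)) * PauliZ = Zrot (((k + 2 : Fin 4) : ℕ) * (Real.pi/2)) := by
  have hv : (k:ℕ) = 0 ∨ (k:ℕ) = 1 ∨ (k:ℕ) = 2 ∨ (k:ℕ) = 3 := by omega
  have hadd : ((k + 2 : Fin 4) : ℕ) = ((k:ℕ) + 2) % 4 := by
    rw [Fin.val_add]
    norm_num
  rcases hv with h | h | h | h <;> rw [hadd, h]
  · rw [show ((0:ℕ) + 2) % 4 = 2 from rfl,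
      show (((0:ℕ)) : ℝ) * (Real.pi/2) = 0 by norm_num,
      show (((2:ℕ)) : ℝ) * (Real.pi/2) = Real.pi by push_cast; ring,
      Zrot_zero, Zrot_pi, one_mul]
  · rw [show ((1:ℕ) + 2) % 4 = 3 from rfl,
      show (((1:ℕ)) : ℝ) * (Real.pi/2) = Real.pi/2 by norm_num,
      show (((3:ℕ)) : ℝ) * (Real.pi/2) = 3*Real.pi/2 by push_cast; ring,
      Zrot_pi_div_two, Zrot_three_pi_div_two, PauliZ_eq, diag2_mul]
    exact mk2_congr rfl rfl rfl (by ring)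
  · rw [show ((2:ℕ) + 2) % 4 = 0 from rfl,
      show (((2:ℕ)) : ℝ) * (Real.pi/2) = Real.pi by push_cast; ring,
      show (((0:ℕ)) : ℝ) * (Real.pi/2) = 0 by norm_num,
      Zrot_pi, Zrot_zero, PZ_mul_PZ]
  · rw [show ((3:ℕ) + 2) % 4 = 1 from rfl,
      show (((3:ℕ)) : ℝ) * (Real.pi/2) = 3*Real.pi/2 by push_cast; ring,
      show (((1:ℕ)) : ℝ) * (Real.pi/2) = Real.pi/2 by norm_num,
      Zrot_three_pi_div_two, Zrot_pi_div_two, PauliZ_eq, diag2_mul]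
    exact mk2_congr rfl rfl rfl (by ring)

lemma mul_PZ_props {M : Matrix (Fin 2) (Fin 2) ℂ} (h : M ∈ Rset) :
    (M * PauliZ ∈ Rset) ∧ (hasRedNode (M * PauliZ) ↔ hasRedNode M) := by
  rcases h with ⟨k, rfl⟩ | h | h
  · refine ⟨Or.inl ⟨k + 2, (green_mul_PZ k)⟩, ?_⟩
    rw [green_mul_PZ k]
    constructor
    · intro h; exact absurd h (green_not_red _)
    · intro h; exact absurd h (green_not_red _)
  · subst h
    rw [red1_mul_PZ]
    exact ⟨red3_mem, by simp [red3_is_red, red1_is_red]⟩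
  · subst h
    rw [red3_mul_PZ]
    exact ⟨red1_mem, by simp [red3_is_red, red1_is_red]⟩
/-! ### The eight per-site identities for transformation II -/

lemma PauliX_eq : PauliX = !![(0:ℂ),1;1,0] := rfl

section caseIdentities

local notation "Zq" => Zrot (Real.pi/2)
local notation "Zt" => Zrot (3*Real.pi/2)
local notation "Xm2" => Xrot (-(Real.pi/2))
local notation "Xp2" => Xrot (Real.pi/2)

lemma case1_p : Zq * (Xm2 * (Zq * (Xm2 * PauliZ))) = (-1 : ℂ) • (Xp2 * Zq) := by
  rw [Zrot_pi_div_two, Xrot_neg_pi_div_two, Xrot_pi_div_two, PauliZ_eq]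
  ext i j
  fin_cases i <;> fin_cases j <;>
    simp [Matrix.mul_apply, Fin.sum_univ_two, Complex.ext_iff] <;> norm_num

lemma case1_q : (Xp2 * Zq) * (Zq * (Xm2 * (Zq * PauliX))) = (-1 : ℂ) • Zq := by
  rw [Zrot_pi_div_two, Xrot_neg_pi_div_two, Xrot_pi_div_two, PauliX_eq]
  ext i j
  fin_cases i <;> fin_cases j <;>
    simp [Matrix.mul_apply, Fin.sum_univ_two, Complex.ext_iff] <;> norm_num

lemma case2_p : Zt * (Xm2 * (Zq * (Xm2 * (PauliX * PauliZ)))) = (1 : ℂ) • (Xp2 * Zq) := by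
  rw [Zrot_pi_div_two, Zrot_three_pi_div_two, Xrot_neg_pi_div_two, Xrot_pi_div_two,
    PauliX_eq, PauliZ_eq]
  ext i j
  fin_cases i <;> fin_cases j <;>
    simp [Matrix.mul_apply, Fin.sum_univ_two, Complex.ext_iff] <;> norm_num

lemma case2_q : (Xp2 * Zq) * (Zq * (Xm2 * (Zq * (PauliZ * PauliX)))) = (1 : ℂ) • Zt := by
  rw [Zrot_pi_div_two, Zrot_three_pi_div_two, Xrot_neg_pi_div_two, Xrot_pi_div_two,
    PauliX_eq, PauliZ_eq]
  ext i j
  fin_cases i <;> fin_cases j <;>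
    simp [Matrix.mul_apply, Fin.sum_univ_two, Complex.ext_iff] <;> norm_num

lemma case3_p : Zq * (Xm2 * (Zq * Xm2)) = (-1 : ℂ) • (Xp2 * Zt) := by
  rw [Zrot_pi_div_two, Zrot_three_pi_div_two, Xrot_neg_pi_div_two, Xrot_pi_div_two]
  ext i j
  fin_cases i <;> fin_cases j <;>
    simp [Matrix.mul_apply, Fin.sum_univ_two, Complex.ext_iff] <;> norm_num

lemma case3_q : (Xp2 * Zt) * (Zq * (Xm2 * Zq)) = (1 : ℂ) • Zq := by
  rw [Zrot_pi_div_two, Zrot_three_pi_div_two, Xrot_neg_pi_div_two, Xrot_pi_div_two]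
  ext i j
  fin_cases i <;> fin_cases j <;>
    simp [Matrix.mul_apply, Fin.sum_univ_two, Complex.ext_iff] <;> norm_num

lemma case4_p : Zt * (Xm2 * (Zq * (Xm2 * PauliX))) = (1 : ℂ) • (Xp2 * Zt) := by
  rw [Zrot_pi_div_two, Zrot_three_pi_div_two, Xrot_neg_pi_div_two, Xrot_pi_div_two, PauliX_eq]
  ext i j
  fin_cases i <;> fin_cases j <;>
    simp [Matrix.mul_apply, Fin.sum_univ_two, Complex.ext_iff] <;> norm_num

lemma case4_q : (Xp2 * Zt) * (Zq * (Xm2 * (Zq * PauliZ))) = (1 : ℂ) • Zt := by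
  rw [Zrot_pi_div_two, Zrot_three_pi_div_two, Xrot_neg_pi_div_two, Xrot_pi_div_two, PauliZ_eq]
  ext i j
  fin_cases i <;> fin_cases j <;>
    simp [Matrix.mul_apply, Fin.sum_univ_two, Complex.ext_iff] <;> norm_num

end caseIdentities
/-! ### Local complementation centre lemmas -/

lemma localComp_adj_center_right {V : Type*} (G : SimpleGraph V) (v a : V) :
    (localComp G v).Adj a v ↔ G.Adj a v := by
  rw [localComp_adj]
  have h := G.loopless.irrefl v
  tauto

lemma localComp_adj_center_left {V : Type*} (G : SimpleGraph V) (v a : V) :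
    (localComp G v).Adj v a ↔ G.Adj v a := by
  rw [(localComp G v).adj_comm, localComp_adj_center_right, G.adj_comm]

section pivotAdj

variable {V : Type*} (G : SimpleGraph V) (p q : V)

lemma lc1_adj_qv (hpq : G.Adj p q) (v : V) (hvq : v ≠ q) :
    (localComp G p).Adj q v ↔
      ((G.Adj p v ∧ ¬ G.Adj q v) ∨ (G.Adj q v ∧ ¬ G.Adj p v)) := by
  rw [localComp_adj]
  have hqp : G.Adj q p := hpq.symm
  have h₁ : G.Adj v p ↔ G.Adj p v := G.adj_comm v p
  have h₂ : q ≠ v := fun h => hvq h.symm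
  tauto

lemma lc2_adj_pv (hpq : G.Adj p q) (v : V) (hvp : v ≠ p) (hvq : v ≠ q) :
    (localComp (localComp G p) q).Adj p v ↔ G.Adj q v := by
  rw [localComp_adj]
  have e1 : (localComp G p).Adj p q := (localComp_adj_center_left G p q).mpr hpq
  have e2 : (localComp G p).Adj v q ↔ (localComp G p).Adj q v := (localComp G p).adj_comm v q
  have e3 := lc1_adj_qv G p q hpq v hvq
  have e4 : (localComp G p).Adj p v ↔ G.Adj p v := localComp_adj_center_left G p v
  have e5 : p ≠ v := fun h => hvp h.symm
  rw [e2, e3, e4, iff_true_intro e1, true_and]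
  tauto

lemma lc2_adj_pq (hpq : G.Adj p q) :
    (localComp (localComp G p) q).Adj p q := by
  rw [localComp_adj_center_right]
  exact (localComp_adj_center_left G p q).mpr hpq

lemma lc3_adj_pv (hpq : G.Adj p q) (v : V) (hvp : v ≠ p) (hvq : v ≠ q) :
    (localComp (localComp (localComp G p) q) p).Adj p v ↔ G.Adj q v := by
  rw [localComp_adj_center_left]
  exact lc2_adj_pv G p q hpq v hvp hvq

lemma lc3_adj_pq (hpq : G.Adj p q) :
    (localComp (localComp (localComp G p) q) p).Adj p q := by
  rw [localComp_adj_center_left]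
  exact lc2_adj_pq G p q hpq

lemma lc3_adj_qv (hpq : G.Adj p q) (v : V) (hvp : v ≠ p) (hvq : v ≠ q) :
    (localComp (localComp (localComp G p) q) p).Adj q v ↔ G.Adj p v := by
  rw [localComp_adj]
  have e1 : (localComp (localComp G p) q).Adj q p := (lc2_adj_pq G p q hpq).symm
  have e2 : (localComp (localComp G p) q).Adj v p ↔ G.Adj q v :=
    ((localComp (localComp G p) q).adj_comm v p).trans (lc2_adj_pv G p q hpq v hvp hvq)
  have e3 : (localComp (localComp G p) q).Adj q v ↔
      ((G.Adj p v ∧ ¬ G.Adj q v) ∨ (G.Adj q v ∧ ¬ G.Adj p v)) :=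
    (localComp_adj_center_left (localComp G p) q v).trans (lc1_adj_qv G p q hpq v hvq)
  have e4 : q ≠ v := fun h => hvq h.symm
  rw [e2, e3, iff_true_intro e1, true_and]
  tauto

lemma lc3_adj_uw (hpq : G.Adj p q) (u w : V) (hup : u ≠ p) (huq : u ≠ q)
    (hwp : w ≠ p) (hwq : w ≠ q) (hpu : ¬ G.Adj p u) (hpw : ¬ G.Adj p w) :
    (localComp (localComp (localComp G p) q) p).Adj u w ↔ G.Adj u w := by
  have hup' : ¬ G.Adj u p := fun h => hpu h.symm
  have hwp' : ¬ G.Adj w p := fun h => hpw h.symm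
  have g1uw : (localComp G p).Adj u w ↔ G.Adj u w := by
    rw [localComp_adj]; tauto
  have g1uq : (localComp G p).Adj u q ↔ G.Adj u q := by
    rw [localComp_adj]; tauto
  have g1wq : (localComp G p).Adj w q ↔ G.Adj w q := by
    rw [localComp_adj]; tauto
  have g2uw : (localComp (localComp G p) q).Adj u w ↔
      ((G.Adj u q ∧ G.Adj w q ∧ u ≠ w ∧ ¬ G.Adj u w)
        ∨ (G.Adj u w ∧ ¬ (G.Adj u q ∧ G.Adj w q))) := by
    rw [localComp_adj, g1uw, g1uq, g1wq]
  have g2up : (localComp (localComp G p) q).Adj u p ↔ G.Adj q u :=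
    ((localComp (localComp G p) q).adj_comm u p).trans (lc2_adj_pv G p q hpq u hup huq)
  have g2wp : (localComp (localComp G p) q).Adj w p ↔ G.Adj q w :=
    ((localComp (localComp G p) q).adj_comm w p).trans (lc2_adj_pv G p q hpq w hwp hwq)
  have cuq : G.Adj u q ↔ G.Adj q u := G.adj_comm u q
  have cwq : G.Adj w q ↔ G.Adj q w := G.adj_comm w q
  have hadne : G.Adj u w → u ≠ w := fun h => h.ne
  rw [localComp_adj, g2uw, g2up, g2wp, cuq, cwq]
  by_cases h1 : G.Adj q u <;> by_cases h2 : G.Adj q w <;> by_cases h3 : G.Adj u w <;>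
    simp [h1, h2, h3] <;>
    first
      | exact hadne h3
      | tauto

end pivotAdj
/-! ### The key transformation step -/

set_option maxHeartbeats 1600000 in
lemma key_step {n : ℕ} (G : SimpleGraph (Fin n))
    (A : Fin n → Matrix (Fin 2) (Fin 2) ℂ) (hGA : IsRGSLC G A)
    (p q : Fin n) (hpq : G.Adj p q)
    (hApRed : hasRedNode (A p))
    (tp tq : Bool) (Bp Bq : Matrix (Fin 2) (Fin 2) ℂ) (cp cq : ℂ)
    (hBp : ∃ k : Fin 4, Bp = Zrot ((k : ℕ) * (Real.pi/2)))
    (hBq : Bq ∈ Rset) (hBqRed : hasRedNode Bq)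
    (hcp : ‖cp‖ = 1) (hcq : ‖cq‖ = 1)
    (hp : Bp * (Xrot (-(Real.pi/2)) * (Zrot (Real.pi/2) * (Xrot (-(Real.pi/2)) *
            ((if tp then PauliX else 1) * (if tq then PauliZ else 1))))) = cp • A p)
    (hq : Bq * (Zrot (Real.pi/2) * (Xrot (-(Real.pi/2)) * (Zrot (Real.pi/2) *
            ((if tp then PauliZ else 1) * (if tq then PauliX else 1))))) = cq • A q) :
    ∃ (A' : Fin n → Matrix (Fin 2) (Fin 2) ℂ) (c : ℂ),
      IsRGSLC (localComp (localComp (localComp G p) q) p) A' ∧ ‖c‖ = 1 ∧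
      rgslcState (localComp (localComp (localComp G p) q) p) A' = c • rgslcState G A := by
  classical
  obtain ⟨hRmem, hRedCond⟩ := hGA
  have hqp : G.Adj q p := hpq.symm
  have hne : p ≠ q := hpq.ne
  refine ⟨fun v => if v = p then Bp else if v = q then Bq
      else if ((G.Adj p v ∧ ¬ G.Adj q v ∧ tp = false) ∨ (¬ G.Adj p v ∧ G.Adj q v ∧ tq = false)
        ∨ (G.Adj p v ∧ G.Adj q v ∧ tp = tq)) then A v * PauliZ else A v,
    cp * cq, ⟨?_, ?_⟩, ?_, ?_⟩
  · -- Rset membership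
    intro v
    simp only []
    by_cases hvp : v = p
    · subst hvp
      rw [if_pos rfl]
      exact Or.inl hBp
    rw [if_neg hvp]
    by_cases hvq : v = q
    · rw [if_pos hvq]
      exact hBq
    rw [if_neg hvq]
    by_cases ht : ((G.Adj p v ∧ ¬ G.Adj q v ∧ tp = false) ∨ (¬ G.Adj p v ∧ G.Adj q v ∧ tq = false)
        ∨ (G.Adj p v ∧ G.Adj q v ∧ tp = tq))
    · rw [if_pos ht]
      exact (mul_PZ_props (hRmem v)).1
    · rw [if_neg ht]
      exact hRmem v
  · -- no adjacent red nodes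
    have hBpGreen : ¬ hasRedNode Bp := by
      obtain ⟨k, hk⟩ := hBp
      rw [hk]
      exact green_not_red _
    have hGreenNbr : ∀ v, G.Adj p v → ¬ hasRedNode (A v) :=
      fun v h hr => hRedCond p v h ⟨hApRed, hr⟩
    have hred_other : ∀ v, v ≠ p → v ≠ q →
        (hasRedNode (if v = p then Bp else if v = q then Bq
          else if ((G.Adj p v ∧ ¬ G.Adj q v ∧ tp = false) ∨ (¬ G.Adj p v ∧ G.Adj q v ∧ tq = false)
            ∨ (G.Adj p v ∧ G.Adj q v ∧ tp = tq)) then A v * PauliZ else A v)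
          ↔ hasRedNode (A v)) := by
      intro v hvp hvq
      rw [if_neg hvp, if_neg hvq]
      by_cases ht : ((G.Adj p v ∧ ¬ G.Adj q v ∧ tp = false) ∨ (¬ G.Adj p v ∧ G.Adj q v ∧ tq = false)
          ∨ (G.Adj p v ∧ G.Adj q v ∧ tp = tq))
      · rw [if_pos ht]
        exact (mul_PZ_props (hRmem v)).2
      · rw [if_neg ht]
    intro v w hadj hvw
    obtain ⟨hv, hw⟩ := hvw
    simp only [] at hv hw
    by_cases hvp : v = p
    · subst hvp
      rw [if_pos rfl] at hv
      exact hBpGreen hv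
    by_cases hwp : w = p
    · subst hwp
      rw [if_pos rfl] at hw
      exact hBpGreen hw
    by_cases hvq : v = q
    · rw [hvq] at hadj
      have hwq : w ≠ q := fun h =>
        (localComp (localComp (localComp G p) q) p).loopless.irrefl q (by rw [h] at hadj; exact hadj)
      have hGpw : G.Adj p w := (lc3_adj_qv G p q hpq w hwp hwq).mp hadj
      exact hGreenNbr w hGpw ((hred_other w hwp hwq).mp hw)
    by_cases hwq : w = q
    · rw [hwq] at hadj
      have hadj' : (localComp (localComp (localComp G p) q) p).Adj q v := hadj.symm
      have hGpv : G.Adj p v := (lc3_adj_qv G p q hpq v hvp hvq).mp hadj'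
      exact hGreenNbr v hGpv ((hred_other v hvp hvq).mp hv)
    · have hrv : hasRedNode (A v) := (hred_other v hvp hvq).mp hv
      have hrw : hasRedNode (A w) := (hred_other w hwp hwq).mp hw
      have hav : ¬ G.Adj p v := fun h => hGreenNbr v h hrv
      have haw : ¬ G.Adj p w := fun h => hGreenNbr w h hrw
      have hGvw : G.Adj v w := (lc3_adj_uw G p q hpq v w hvp hvq hwp hwq hav haw).mp hadj
      exact hRedCond v w hGvw ⟨hrv, hrw⟩
  · -- norm of the scalar
    rw [norm_mul, hcp, hcq, one_mul]
  · -- the state equality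
    have hprod : (∏ v, (if v = p then cp else if v = q then cq else (1:ℂ))) = cp * cq := by
      have hsub : ({p, q} : Finset (Fin n)) ⊆ Finset.univ := Finset.subset_univ _
      rw [← Finset.prod_subset hsub (fun x _ hx => by
        simp only [Finset.mem_insert, Finset.mem_singleton] at hx
        push_neg at hx
        rw [if_neg hx.1, if_neg hx.2])]
      rw [Finset.prod_pair hne]
      rw [if_pos rfl, if_neg (fun h : q = p => hne h.symm), if_pos rfl]
    have hsq : (tensorOp (fun u => if tq then (if u = q then PauliX
        else if u ∈ G.neighborFinset q then PauliZ else 1) else 1)).mulVec (graphState G)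
        = graphState G := by
      cases tq
      · have h1 : (fun u : Fin n => if false then (if u = q then PauliX
            else if u ∈ G.neighborFinset q then PauliZ else 1)
            else (1 : Matrix (Fin 2) (Fin 2) ℂ)) = fun _ => 1 := by
          funext u; rfl
        rw [h1, tensorOp_one, Matrix.one_mulVec]
      · have h1 : (fun u : Fin n => if true then (if u = q then PauliX
            else if u ∈ G.neighborFinset q then PauliZ else 1)
            else (1 : Matrix (Fin 2) (Fin 2) ℂ))
            = fun u => if u = q then PauliX else if u ∈ G.neighborFinset q then PauliZ else 1 := by
          funext u; rfl
        rw [h1, stab_fix]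
    have hsp : (tensorOp (fun u => if tp then (if u = p then PauliX
        else if u ∈ G.neighborFinset p then PauliZ else 1) else 1)).mulVec (graphState G)
        = graphState G := by
      cases tp
      · have h1 : (fun u : Fin n => if false then (if u = p then PauliX
            else if u ∈ G.neighborFinset p then PauliZ else 1)
            else (1 : Matrix (Fin 2) (Fin 2) ℂ)) = fun _ => 1 := by
          funext u; rfl
        rw [h1, tensorOp_one, Matrix.one_mulVec]
      · have h1 : (fun u : Fin n => if true then (if u = p then PauliX
            else if u ∈ G.neighborFinset p then PauliZ else 1)
            else (1 : Matrix (Fin 2) (Fin 2) ℂ))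
            = fun u => if u = p then PauliX else if u ∈ G.neighborFinset p then PauliZ else 1 := by
          funext u; rfl
        rw [h1, stab_fix]
    unfold rgslcState
    rw [graphState_localComp (localComp (localComp G p) q) p,
        graphState_localComp (localComp G p) q,
        graphState_localComp G p]
    conv_lhs => rw [← hsp]
    conv_lhs => rw [← hsq]
    simp only [Matrix.mulVec_mulVec, tensorOp_mul]
    rw [← Matrix.smul_mulVec]
    rw [← hprod, ← tensorOp_smul]
    refine congrArg (fun M => Matrix.mulVec M (graphState G)) ?_
    refine congrArg tensorOp ?_
    funext v
    by_cases hvp : v = p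
    · rw [hvp]
      have e1 : (localComp G p).Adj q p := (localComp_adj_center_right G p q).mpr hqp
      simp only [eq_self_iff_true, if_true, if_neg hne, SimpleGraph.mem_neighborFinset,
        iff_true_intro e1, iff_true_intro hqp]
      exact hp
    by_cases hvq : v = q
    · rw [hvq]
      have e2 : (localComp (localComp G p) q).Adj p q := lc2_adj_pq G p q hpq
      have hqp' : ¬ (q = p) := fun h => hne h.symm
      simp only [eq_self_iff_true, if_true, if_neg hqp', SimpleGraph.mem_neighborFinset,
        iff_true_intro e2, iff_true_intro hpq]
      exact hq
    · have e3 : (localComp (localComp G p) q).Adj p v ↔ G.Adj q v :=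
        lc2_adj_pv G p q hpq v hvp hvq
      have e4 : (localComp G p).Adj q v ↔
          ((G.Adj p v ∧ ¬ G.Adj q v) ∨ (G.Adj q v ∧ ¬ G.Adj p v)) :=
        lc1_adj_qv G p q hpq v hvq
      simp only [if_neg hvp, if_neg hvq, SimpleGraph.mem_neighborFinset, e3, e4]
      by_cases ha : G.Adj p v <;> by_cases hb : G.Adj q v <;> cases tp <;> cases tq <;>
        simp [ha, hb, one_smul, mul_assoc, Zp_mul_Zp, Zp_mul_Zp_assoc, PZ_mul_PZ,
          PZ_mul_PZ_assoc, mul_one, one_mul]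
/-- rGS-LC equivalence transformation II: if `p`, `q` are adjacent, `A_p = X_{π/2}·Z_ε`
with `ε ∈ {π/2, 3π/2}` and `A_q = Z_δ` with `δ ∈ {π/2, 3π/2}`, then local complementation
along the edge `{p,q}` yields an equal (up to unit scalar) rGS-LC state on the graph
`G' = ((G⋆p)⋆q)⋆p`. -/
theorem rGSLC_transformation_two {n : ℕ} (G : SimpleGraph (Fin n))
    (A : Fin n → Matrix (Fin 2) (Fin 2) ℂ) (hGA : IsRGSLC G A)
    (p q : Fin n) (hpq : G.Adj p q)
    (ε : ℝ) (hε : ε = Real.pi / 2 ∨ ε = 3 * Real.pi / 2)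
    (hAp : A p = Xrot (Real.pi / 2) * Zrot ε)
    (δ : ℝ) (hδ : δ = Real.pi / 2 ∨ δ = 3 * Real.pi / 2)
    (hAq : A q = Zrot δ) :
    ∃ (A' : Fin n → Matrix (Fin 2) (Fin 2) ℂ) (c : ℂ),
      IsRGSLC (localComp (localComp (localComp G p) q) p) A' ∧ ‖c‖ = 1 ∧
      rgslcState (localComp (localComp (localComp G p) q) p) A' = c • rgslcState G A := by

  have hv1 : (((1 : Fin 4) : ℕ) : ℝ) * (Real.pi/2) = Real.pi/2 := by
    norm_num
  have hv3 : (((3 : Fin 4) : ℕ) : ℝ) * (Real.pi/2) = 3 * Real.pi/2 := by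
    rw [show ((3 : Fin 4) : ℕ) = 3 from rfl]
    push_cast
    ring
  rcases hε with hε | hε <;> rcases hδ with hδ | hδ <;> subst hε <;> subst hδ
  · exact key_step G A hGA p q hpq (by rw [hAp]; exact red1_is_red) false true
      (Zrot (Real.pi/2)) (Xrot (Real.pi/2) * Zrot (Real.pi/2)) (-1) (-1)
      ⟨1, by rw [hv1]⟩ red1_mem red1_is_red (by simp) (by simp)
      (by rw [hAp]; simpa using case1_p) (by rw [hAq]; simpa using case1_q)
  · exact key_step G A hGA p q hpq (by rw [hAp]; exact red1_is_red) true true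
      (Zrot (3*Real.pi/2)) (Xrot (Real.pi/2) * Zrot (Real.pi/2)) 1 1
      ⟨3, by rw [hv3]⟩ red1_mem red1_is_red (by simp) (by simp)
      (by rw [hAp]; simpa using case2_p) (by rw [hAq]; simpa using case2_q)
  · exact key_step G A hGA p q hpq (by rw [hAp]; exact red3_is_red) false false
      (Zrot (Real.pi/2)) (Xrot (Real.pi/2) * Zrot (3*Real.pi/2)) (-1) 1
      ⟨1, by rw [hv1]⟩ red3_mem red3_is_red (by simp) (by simp)
      (by rw [hAp]; simpa using case3_p) (by rw [hAq]; simpa using case3_q)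
  · exact key_step G A hGA p q hpq (by rw [hAp]; exact red3_is_red) true false
      (Zrot (3*Real.pi/2)) (Xrot (Real.pi/2) * Zrot (3*Real.pi/2)) 1 1
      ⟨3, by rw [hv3]⟩ red3_mem red3_is_red (by simp) (by simp)
      (by rw [hAp]; simpa using case4_p) (by rw [hAq]; simpa using case4_q)
end
end
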